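/- (Right residuation for ↓) Let y be a state variable not occurring in α or β. For any Kripke model M and assignment g: M,g ⊩ ↓x.β ≤ α iff for every world w ∈ W, the inequality β[y/x] ≤ (y → E(y ∧ α)) holds in (M, g[y↦w]), where E is the global diamond. -/

import Mathlib

inductive Form where
  | prop : ℕ → Form
  | nom : ℕ → Form
  | svar : ℕ → Form
  | bot : Form
  | top : Form
  | neg : Form → Form
  | and : Form → Form → Form
  | or : Form → Form → Form
  | imp : Form → Form → Form
  | box : Form → Form
  | dia : Form → Form
  | atN : ℕ → Form → Form
  | atS : ℕ → Form → Form
  | bind : ℕ → Form → Form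
  | bbox : Form → Form
  | bdia : Form → Form
  | glA : Form → Form
  | glE : Form → Form
  | sall : ℕ → Form → Form
  | sex : ℕ → Form → Form

structure Model (W : Type) where
  R : W → W → Prop
  Vp : ℕ → W → Prop
  Vn : ℕ → W

def upd {W : Type} (g : ℕ → W) (x : ℕ) (w : W) : ℕ → W :=
  fun y => if y = x then w else g y

def sat {W : Type} (M : Model W) : (ℕ → W) → W → Form → Prop
  | _, w, .prop p => M.Vp p w
  | _, w, .nom i => M.Vn i = w
  | g, w, .svar x => g x = w
  | _, _, .bot => False
  | _, _, .top => True
  | g, w, .neg φ => ¬ sat M g w φ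
  | g, w, .and φ ψ => sat M g w φ ∧ sat M g w ψ
  | g, w, .or φ ψ => sat M g w φ ∨ sat M g w ψ
  | g, w, .imp φ ψ => sat M g w φ → sat M g w ψ
  | g, w, .box φ => ∀ v, M.R w v → sat M g v φ
  | g, w, .dia φ => ∃ v, M.R w v ∧ sat M g v φ
  | g, _, .atN i φ => sat M g (M.Vn i) φ
  | g, _, .atS x φ => sat M g (g x) φ
  | g, w, .bind x φ => sat M (upd g x w) w φ
  | g, w, .bbox φ => ∀ v, M.R v w → sat M g v φ
  | g, w, .bdia φ => ∃ v, M.R v w ∧ sat M g v φ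
  | g, _, .glA φ => ∀ v, sat M g v φ
  | g, _, .glE φ => ∃ v, sat M g v φ
  | g, w, .sall x φ => ∀ v, sat M (upd g x v) w φ
  | g, w, .sex x φ => ∃ v, sat M (upd g x v) w φ

/-- The inequality φ ≤ ψ holds in (M,g). -/
def holdsIneq {W : Type} (M : Model W) (g : ℕ → W) (φ ψ : Form) : Prop :=
  ∀ w, sat M g w φ → sat M g w ψ

/-- Frame validity of an inequality. -/
def validIneq {W : Type} (R : W → W → Prop) (φ ψ : Form) : Prop :=
  ∀ (Vp : ℕ → W → Prop) (Vn : ℕ → W) (g : ℕ → W),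
    holdsIneq ⟨R, Vp, Vn⟩ g φ ψ

/-- The state variable `x` occurs in the formula (free or bound). -/
def svarIn (x : ℕ) : Form → Prop
  | .prop _ => False
  | .nom _ => False
  | .svar y => y = x
  | .bot => False
  | .top => False
  | .neg φ => svarIn x φ
  | .and φ ψ => svarIn x φ ∨ svarIn x ψ
  | .or φ ψ => svarIn x φ ∨ svarIn x ψ
  | .imp φ ψ => svarIn x φ ∨ svarIn x ψ
  | .box φ => svarIn x φ
  | .dia φ => svarIn x φ
  | .atN _ φ => svarIn x φ
  | .atS y φ => y = x ∨ svarIn x φ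
  | .bind y φ => y = x ∨ svarIn x φ
  | .bbox φ => svarIn x φ
  | .bdia φ => svarIn x φ
  | .glA φ => svarIn x φ
  | .glE φ => svarIn x φ
  | .sall y φ => y = x ∨ svarIn x φ
  | .sex y φ => y = x ∨ svarIn x φ

/-- Substitution of the state variable `y` for free occurrences of the state variable `x`. -/
def substSvar (x y : ℕ) : Form → Form
  | .prop q => .prop q
  | .nom i => .nom i
  | .svar z => if z = x then .svar y else .svar z
  | .bot => .bot
  | .top => .top
  | .neg φ => .neg (substSvar x y φ)
  | .and φ ψ => .and (substSvar x y φ) (substSvar x y ψ)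
  | .or φ ψ => .or (substSvar x y φ) (substSvar x y ψ)
  | .imp φ ψ => .imp (substSvar x y φ) (substSvar x y ψ)
  | .box φ => .box (substSvar x y φ)
  | .dia φ => .dia (substSvar x y φ)
  | .atN i φ => .atN i (substSvar x y φ)
  | .atS z φ => if z = x then .atS y (substSvar x y φ) else .atS z (substSvar x y φ)
  | .bind z φ => if z = x then .bind z φ else .bind z (substSvar x y φ)
  | .bbox φ => .bbox (substSvar x y φ)
  | .bdia φ => .bdia (substSvar x y φ)
  | .glA φ => .glA (substSvar x y φ)
  | .glE φ => .glE (substSvar x y φ)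
  | .sall z φ => if z = x then .sall z φ else .sall z (substSvar x y φ)
  | .sex z φ => if z = x then .sex z φ else .sex z (substSvar x y φ)

/-!
Under `g[y ↦ w]` the formula `y → E(y ∧ α)` holds trivially at every world other than `w`,
and at `w` iff `α` does; so the right-hand side says: whenever `β[y/x]` holds at `w`
under `g[y ↦ w]`, so does `α`.
As `y` is fresh, `β[y/x]` under `g[y ↦ w]` means `β` under `g[x ↦ w]`, and `α` ignores `y`;
this is the clause for `↓x.β ≤ α`.
-/

theorem upd_eq_update {W : Type} (g : ℕ → W) (x : ℕ) (w : W) :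
    upd g x w = Function.update g x w := by
  funext z
  simp [upd, Function.update_apply]

theorem upd_self {W : Type} (g : ℕ → W) (x : ℕ) (w : W) : upd g x w x = w := by
  simp [upd]

theorem upd_of_ne {W : Type} (g : ℕ → W) {x z : ℕ} (h : z ≠ x) (w : W) :
    upd g x w z = g z :=
  if_neg h

theorem upd_upd_self {W : Type} (g : ℕ → W) (x : ℕ) (v w : W) :
    upd (upd g x v) x w = upd g x w := by
  simp only [upd_eq_update, Function.update_idem]

theorem upd_comm {W : Type} (g : ℕ → W) {x z : ℕ} (h : x ≠ z) (v w : W) :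
    upd (upd g x v) z w = upd (upd g z w) x v := by
  simp only [upd_eq_update, Function.update_comm h.symm]

section Semantics

variable {W : Type} (M : Model W)

theorem sat_congr {φ : Form} {g g' : ℕ → W} (h : ∀ z, svarIn z φ → g z = g' z) (w : W) :
    sat M g w φ ↔ sat M g' w φ := by
  have upd_agree : ∀ {g g' : ℕ → W} {z : ℕ} {P : ℕ → Prop},
      (∀ u, z = u ∨ P u → g u = g' u) → ∀ v u, P u → upd g z v u = upd g' z v u := by
    intro g g' z P h v u hu
    by_cases huz : u = z
    · simp [upd, huz]
    · simp [upd, huz, h u (.inr hu)]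
  induction φ generalizing g g' w with
  | prop | nom | bot | top => exact Iff.rfl
  | svar z => simp [sat, h z rfl]
  | neg φ ih => exact not_congr (ih h w)
  | and φ ψ ihφ ihψ =>
    exact and_congr (ihφ (fun z hz => h z (.inl hz)) w) (ihψ (fun z hz => h z (.inr hz)) w)
  | or φ ψ ihφ ihψ =>
    exact or_congr (ihφ (fun z hz => h z (.inl hz)) w) (ihψ (fun z hz => h z (.inr hz)) w)
  | imp φ ψ ihφ ihψ =>
    exact imp_congr (ihφ (fun z hz => h z (.inl hz)) w) (ihψ (fun z hz => h z (.inr hz)) w)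
  | box φ ih | bbox φ ih => exact forall_congr' fun v => imp_congr Iff.rfl (ih h v)
  | dia φ ih | bdia φ ih => exact exists_congr fun v => and_congr Iff.rfl (ih h v)
  | glA φ ih => exact forall_congr' fun v => ih h v
  | glE φ ih => exact exists_congr fun v => ih h v
  | atN i φ ih => exact ih h _
  | atS z φ ih =>
    simp only [sat, h z (.inl rfl)]
    exact ih (fun u hu => h u (.inr hu)) _
  | bind z φ ih => exact ih (upd_agree h w) w
  | sall z φ ih => exact forall_congr' fun v => ih (upd_agree h v) w
  | sex z φ ih => exact exists_congr fun v => ih (upd_agree h v) w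

theorem sat_upd_of_not_svarIn {φ : Form} {y : ℕ} (hy : ¬ svarIn y φ) (g : ℕ → W)
    (v w : W) :
    sat M (upd g y v) w φ ↔ sat M g w φ :=
  sat_congr M (fun z hz => upd_of_ne g (fun hzy : z = y => hy (hzy ▸ hz)) v) w

-- `substSvar` is not capture-avoiding; freshness of `y`, also as a bound variable,
-- prevents capture.
theorem sat_substSvar {x y : ℕ} {φ : Form} (hy : ¬ svarIn y φ) (g : ℕ → W) (w : W) :
    sat M g w (substSvar x y φ) ↔ sat M (upd g x (g y)) w φ := by
  have upd_binder : ∀ {z : ℕ} (g : ℕ → W) (v : W), z ≠ y → z ≠ x →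
      upd (upd g z v) x (upd g z v y) = upd (upd g x (g y)) z v := by
    intro z g v hzy hzx
    rw [upd_comm _ hzx, upd_of_ne g hzy.symm]
  induction φ generalizing g w with
  | prop | nom | bot | top => exact Iff.rfl
  | svar z => by_cases hz : z = x <;> simp [substSvar, sat, upd, hz]
  | neg φ ih => exact not_congr (ih hy g w)
  | and φ ψ ihφ ihψ =>
    simp only [svarIn, not_or] at hy
    exact and_congr (ihφ hy.1 g w) (ihψ hy.2 g w)
  | or φ ψ ihφ ihψ =>
    simp only [svarIn, not_or] at hy
    exact or_congr (ihφ hy.1 g w) (ihψ hy.2 g w)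
  | imp φ ψ ihφ ihψ =>
    simp only [svarIn, not_or] at hy
    exact imp_congr (ihφ hy.1 g w) (ihψ hy.2 g w)
  | box φ ih | bbox φ ih => exact forall_congr' fun v => imp_congr Iff.rfl (ih hy g v)
  | dia φ ih | bdia φ ih => exact exists_congr fun v => and_congr Iff.rfl (ih hy g v)
  | glA φ ih => exact forall_congr' fun v => ih hy g v
  | glE φ ih => exact exists_congr fun v => ih hy g v
  | atN i φ ih => exact ih hy g _
  | atS z φ ih =>
    simp only [svarIn, not_or] at hy
    by_cases hz : z = x <;> simp [substSvar, sat, hz, upd, ih hy.2]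
  | bind z φ ih | sall z φ ih | sex z φ ih =>
    simp only [svarIn, not_or] at hy
    by_cases hz : z = x
    · simp only [substSvar, hz, if_true, sat, upd_upd_self]
    · simp only [substSvar, hz, if_false, sat, ih hy.2, upd_binder g _ hy.1 hz]

theorem sat_substSvar_upd {x y : ℕ} {φ : Form} (hy : ¬ svarIn y φ) (g : ℕ → W) (v w : W) :
    sat M (upd g y v) w (substSvar x y φ) ↔ sat M (upd g x v) w φ := by
  rw [sat_substSvar M hy, upd_self]
  by_cases hxy : x = y
  · rw [hxy, upd_upd_self]
  · rw [upd_comm _ (Ne.symm hxy), sat_upd_of_not_svarIn M hy]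

end Semantics

theorem right_residuation_downarrow {W : Type} (M : Model W) (g : ℕ → W)
    (x y : ℕ) (α β : Form) (hyα : ¬ svarIn y α) (hyβ : ¬ svarIn y β) :
    holdsIneq M g (.bind x β) α ↔
      ∀ w : W, holdsIneq M (upd g y w)
        (substSvar x y β) (.imp (.svar y) (.glE (.and (.svar y) α))) := by
  simp only [holdsIneq, sat, upd_self, sat_substSvar_upd M hyβ, sat_upd_of_not_svarIn M hyα]
  refine ⟨fun H w v hv hwv => ⟨v, hwv, H v (hwv ▸ hv)⟩, fun H w hw => ?_⟩
  obtain ⟨_, rfl, hα⟩ := H w w hw rfl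
  exact hα
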